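/- Completeness of candidate generation: Let δ be a finite database of C-sequences, k ∈ ℕ, and ξ ∈ ℝ. If an L-sequence L with |L| ≤ k is a high utility interval-based pattern, i.e. u_max(L) ≥ ξ, then every sub-L-sequence L' of L is promising, i.e. LWU_k(L') ≥ ξ. -/

import Mathlib

open scoped Classical

variable {α : Type*}

/-- C-eventset containment: `(c, λ) ⊑ (c', λ')` iff `c ⊆ c'` and `λ = λ'`. -/
def EsetSub (σ τ : Finset α × ℕ) : Prop := σ.1 ⊆ τ.1 ∧ σ.2 = τ.2

/-- C-sequence containment: `C ⊑ C'` iff there are strictly increasing indices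
`j_1 < … < j_n` into `C'` with `σ_k ⊑ σ'_{j_k}` for all `k`. -/
def CSub (C C' : List (Finset α × ℕ)) : Prop :=
  ∃ D : List (Finset α × ℕ), D.Sublist C' ∧ List.Forall₂ EsetSub C D

/-- `C ∼ L` : the C-sequence `C` matches the L-sequence `L`. -/
def Matches (C : List (Finset α × ℕ)) (L : List (Finset α)) : Prop :=
  C.map Prod.fst = L

/-- `L` is a sub-L-sequence of `L'`. -/
def LSub (L L' : List (Finset α)) : Prop :=
  ∃ M : List (Finset α), M.Sublist L' ∧ List.Forall₂ (fun a b => a ⊆ b) L M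

/-- Utility of a C-eventset: `u_e (c, λ) = λ · Σ_{l ∈ c} p l`. -/
noncomputable def ue (p : α → ℝ) (σ : Finset α × ℕ) : ℝ := (σ.2 : ℝ) * ∑ l ∈ σ.1, p l

/-- Utility of a C-sequence: sum of the utilities of its C-eventsets. -/
noncomputable def us (p : α → ℝ) (C : List (Finset α × ℕ)) : ℝ := (C.map (ue p)).sum

/-- `u_maxk (C, k)`: the maximum utility of at most `k` C-eventsets in `C`. -/
noncomputable def umaxk (p : α → ℝ) (C : List (Finset α × ℕ)) (k : ℕ) : ℝ :=
  sSup { x : ℝ | ∃ C'', CSub C'' C ∧ C''.length ≤ k ∧ x = us p C'' }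

/-- `LWU_k(L)`: the L-sequence-weighted utilization of `L` w.r.t. maximum length `k`. -/
noncomputable def LWU (p : α → ℝ) (δ : Finset (List (Finset α × ℕ))) (k : ℕ)
    (L : List (Finset α)) : ℝ :=
  ∑ C ∈ δ, if ∃ C', CSub C' C ∧ Matches C' L then umaxk p C k else 0

/-- `u_max(L)`: the maximum utility of the L-sequence `L` in the database `δ`. -/
noncomputable def umax (p : α → ℝ) (δ : Finset (List (Finset α × ℕ)))
    (L : List (Finset α)) : ℝ :=
  ∑ C ∈ δ, sSup ({ x : ℝ | ∃ C', CSub C' C ∧ Matches C' L ∧ x = us p C' } ∪ {0})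

/-!
Fix a C-sequence `C ∈ δ` and a `C' ⊑ C` with `C' ∼ L`. Since `|C'| = |L| ≤ k`, the utility of
`C'` is one of the values over which `u_maxk(C, k)` is the maximum. Moreover `L' ⊑ L` picks out
a subsequence of `C'` whose coincidences can be shrunk to those of `L'` (keeping the durations),
which gives a `C'' ⊑ C` with `C'' ∼ L'`; so `C` contributes `u_maxk(C, k)` to `LWU_k(L')`.
Hence each summand of `u_max(L)` is at most the corresponding summand of `LWU_k(L')`.
-/

open List

instance : IsTrans (Finset α × ℕ) EsetSub :=
  ⟨fun _ _ _ h₁ h₂ => ⟨h₁.1.trans h₂.1, h₁.2.trans h₂.2⟩⟩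

theorem csub_iff_sublistForall₂ {C D : List (Finset α × ℕ)} :
    CSub C D ↔ SublistForall₂ EsetSub C D := by
  simp only [CSub, sublistForall₂_iff, and_comm]

theorem CSub.nil (C : List (Finset α × ℕ)) : CSub [] C :=
  ⟨[], nil_sublist C, .nil⟩

theorem CSub.trans {C D E : List (Finset α × ℕ)} (h₁ : CSub C D) (h₂ : CSub D E) :
    CSub C E := by
  rw [csub_iff_sublistForall₂] at *
  exact _root_.trans h₁ h₂

theorem Matches.length_eq {C : List (Finset α × ℕ)} {L : List (Finset α)} (h : Matches C L) :
    C.length = L.length := by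
  rw [← h, length_map]

theorem exists_csub_matches_of_sublistForall₂ {L : List (Finset α)}
    {C : List (Finset α × ℕ)} (h : SublistForall₂ (fun c σ => c ⊆ σ.1) L C) :
    ∃ D, CSub D C ∧ Matches D L := by
  simp only [csub_iff_sublistForall₂, Matches]
  induction h with
  | nil => exact ⟨[], .nil, rfl⟩
  | @cons c σ _ _ hcσ _ ih =>
    obtain ⟨D, hD, rfl⟩ := ih
    exact ⟨(c, σ.2) :: D, .cons ⟨hcσ, rfl⟩ hD, rfl⟩
  | cons_right _ ih =>
    obtain ⟨D, hD, hDL⟩ := ih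
    exact ⟨D, .cons_right hD, hDL⟩

theorem exists_csub_matches_of_lsub {C : List (Finset α × ℕ)} {L L' : List (Finset α)}
    (hC : Matches C L) (hL' : LSub L' L) : ∃ D, CSub D C ∧ Matches D L' := by
  obtain ⟨M, hML, hL'M⟩ := hL'
  have : SublistForall₂ (· ⊆ ·) L' (C.map Prod.fst) := by
    rw [hC]
    exact sublistForall₂_iff.2 ⟨M, hL'M, hML⟩
  exact exists_csub_matches_of_sublistForall₂ (sublistForall₂_map_right_iff.1 this)

theorem ue_nonneg {p : α → ℝ} (hp : ∀ l, 0 ≤ p l) (σ : Finset α × ℕ) : 0 ≤ ue p σ :=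
  mul_nonneg σ.2.cast_nonneg (Finset.sum_nonneg fun l _ => hp l)

theorem ue_le_ue_of_esetSub {p : α → ℝ} (hp : ∀ l, 0 ≤ p l) {σ τ : Finset α × ℕ}
    (h : EsetSub σ τ) : ue p σ ≤ ue p τ := by
  rw [ue, ue, h.2]
  gcongr
  exacts [fun l _ _ => hp l, h.1]

theorem us_le_us_of_csub {p : α → ℝ} (hp : ∀ l, 0 ≤ p l) {C D : List (Finset α × ℕ)}
    (h : CSub C D) : us p C ≤ us p D := by
  obtain ⟨E, hED, hCE⟩ := h
  calc us p C ≤ us p E :=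
        Forall₂.sum_le_sum <| forall₂_map_left_iff.2 <| forall₂_map_right_iff.2 <|
          hCE.imp fun _ _ => ue_le_ue_of_esetSub hp
    _ ≤ us p D :=
        (hED.map (ue p)).sum_le_sum <| by
          simpa only [mem_map, forall_exists_index, and_imp, forall_apply_eq_imp_iff₂]
            using fun σ _ => ue_nonneg hp σ

theorem le_umaxk {p : α → ℝ} (hp : ∀ l, 0 ≤ p l) {C C'' : List (Finset α × ℕ)} {k : ℕ}
    (hC'' : CSub C'' C) (hk : C''.length ≤ k) : us p C'' ≤ umaxk p C k :=
  le_csSup ⟨us p C, by rintro _ ⟨D, hD, -, rfl⟩; exact us_le_us_of_csub hp hD⟩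
    ⟨C'', hC'', hk, rfl⟩

theorem umaxk_nonneg {p : α → ℝ} (hp : ∀ l, 0 ≤ p l) (C : List (Finset α × ℕ)) (k : ℕ) :
    0 ≤ umaxk p C k :=
  le_umaxk hp (CSub.nil C) k.zero_le

/-- Completeness of candidate generation: if `|L| ≤ k` and
`u_max(L) ≥ ξ`, then every sub-L-sequence `L'` of `L` is promising: `LWU_k(L') ≥ ξ`. -/
theorem candidate_complete (p : α → ℝ) (hp : ∀ l, 0 ≤ p l)
    (δ : Finset (List (Finset α × ℕ))) (k : ℕ) (ξ : ℝ)
    (L : List (Finset α)) (hL : L.length ≤ k) (hhigh : ξ ≤ umax p δ L) :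
    ∀ L' : List (Finset α), LSub L' L → ξ ≤ LWU p δ k L' := by
  intro L' hL'
  refine hhigh.trans (Finset.sum_le_sum fun C _ => ?_)
  have hterm_nonneg : 0 ≤ if ∃ C', CSub C' C ∧ Matches C' L' then umaxk p C k else 0 := by
    split_ifs
    exacts [umaxk_nonneg hp C k, le_rfl]
  refine Real.sSup_le ?_ hterm_nonneg
  rintro x (⟨C', hC'C, hC'L, rfl⟩ | rfl)
  · obtain ⟨D, hDC', hDL'⟩ := exists_csub_matches_of_lsub hC'L hL'
    rw [if_pos ⟨D, hDC'.trans hC'C, hDL'⟩]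
    exact le_umaxk hp hC'C (hC'L.length_eq ▸ hL)
  · exact hterm_nonneg
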